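/- In the graph K₄′ (obtained from K₄ by subdividing once the three edges incident with a vertex v), there is no proper 3-coloring in which all three neighbors of v receive the same color. -/
import Mathlib

open SimpleGraph

noncomputable section

/-- `K₄'`: the graph obtained from `K₄` by subdividing once each of the three edges
incident with the vertex `v = 0`. Vertices `1,2,3` form a triangle and `4,5,6` are the
subdivision vertices joining `0` to `1,2,3` respectively. -/
def K4Sub : SimpleGraph (Fin 7) :=
  SimpleGraph.fromRel (fun a b =>
    (a, b) ∈ ([(0, 4), (0, 5), (0, 6), (4, 1), (5, 2), (6, 3), (1, 2), (2, 3), (1, 3)] :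
      List (Fin 7 × Fin 7)))

/-- In `K₄'` there is no proper 3-coloring in which the three neighbors `4, 5, 6` of
the degree-3 vertex `0` all receive the same color. -/
theorem k4sub_no_monochromatic_neighborhood :
    ∀ C : K4Sub.Coloring (Fin 3), ¬ (C 4 = C 5 ∧ C 5 = C 6) := by
  rintro C ⟨h45, h56⟩
  have h12 := C.valid (show K4Sub.Adj 1 2 by unfold K4Sub; rw [fromRel_adj]; decide)
  have h23 := C.valid (show K4Sub.Adj 2 3 by unfold K4Sub; rw [fromRel_adj]; decide)
  have h13 := C.valid (show K4Sub.Adj 1 3 by unfold K4Sub; rw [fromRel_adj]; decide)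
  have h41 := C.valid (show K4Sub.Adj 4 1 by unfold K4Sub; rw [fromRel_adj]; decide)
  have h52 := C.valid (show K4Sub.Adj 5 2 by unfold K4Sub; rw [fromRel_adj]; decide)
  have h63 := C.valid (show K4Sub.Adj 6 3 by unfold K4Sub; rw [fromRel_adj]; decide)
  rw [← h45] at h52
  rw [← h56, ← h45] at h63
  have b1 := (C 1).isLt
  have b2 := (C 2).isLt
  have b3 := (C 3).isLt
  have b4 := (C 4).isLt
  simp only [ne_eq, Fin.ext_iff] at h12 h23 h13 h41 h52 h63
  omega
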